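/- arXiv:1911.00358 — 2 statements merged into one kernel-verified Lean document; each statement's English description precedes it below -/
import Mathlib

section
/- For every integer n ≥ 2 and every integer r with 3 ≤ r ≤ n+1, an invertible linear map φ : V → V is an automorphism of the algebra D_r if and only if φ maps the subspace W = span{e₁, …, e_r} into itself and, writing U for the matrix of φ restricted to W in the basis e₁, …, e_r and w for the determinant of the endomorphism of V/W induced by φ, one has U S_r Uᵀ = det(U) · w · S_r, where S_r = diag(1, −1, …, (−1)^{r−1}). -/
open Function Submodule

/-! Common framework: `V = ℂ^{n+1}`, `n`-ary multiplications as functions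
`(Fin n → V) → V`, the action of `GL(V)` on them, orbits, and the
(n+1)-dimensional n-ary Filippov algebras of Kaygorodov–Volkov, each described
as an alternating `n`-linear map by its values on the increasing tuples of
distinct standard basis vectors (0-indexed: `bt n j` is the tuple omitting `e j`). -/

/-- The underlying space `V = ℂ^{n+1}`. -/
abbrev nV (n : ℕ) : Type := Fin (n + 1) → ℂ

/-- The `j`-th standard basis vector of `V` (0-indexed). -/
def sb (n : ℕ) (j : Fin (n + 1)) : nV n := Pi.single j 1

/-- The increasing `n`-tuple of standard basis vectors omitting `e j`. -/
def bt (n : ℕ) (j : Fin (n + 1)) : Fin n → nV n := fun k => sb n (j.succAbove k)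

/-- The action of `GL(V)` (invertible linear maps) on `n`-ary multiplications:
`(g • μ)(x₁, …, xₙ) = g (μ (g⁻¹ x₁, …, g⁻¹ xₙ))`. -/
noncomputable def glAct (n : ℕ) (g : nV n ≃ₗ[ℂ] nV n) (μ : (Fin n → nV n) → nV n) :
    (Fin n → nV n) → nV n :=
  fun x => g (μ fun i => g.symm (x i))

/-- The `GL(V)`-orbit of an `n`-ary multiplication. -/
def glOrbit (n : ℕ) (μ : (Fin n → nV n) → nV n) : Set ((Fin n → nV n) → nV n) :=
  {ν | ∃ g : nV n ≃ₗ[ℂ] nV n, ν = glAct n g μ}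

/-- The algebra `B`: `[e₂, …, e_{n+1}] = e₁` (0-indexed: the tuple omitting `e 0`
maps to `e 0`), all other increasing basis products zero. -/
def IsB (n : ℕ) (μ : AlternatingMap ℂ (nV n) (nV n) (Fin n)) : Prop :=
  μ (bt n 0) = sb n 0 ∧ ∀ j : Fin (n + 1), j ≠ 0 → μ (bt n j) = 0

/-- The algebra `C₁`: `[e₂, …, e_{n+1}] = e₁`, `[e₁, e₃, …, e_{n+1}] = e₂`. -/
def IsC1 (n : ℕ) (μ : AlternatingMap ℂ (nV n) (nV n) (Fin n)) : Prop :=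
  μ (bt n 0) = sb n 0 ∧ μ (bt n 1) = sb n 1 ∧
    ∀ j : Fin (n + 1), j ≠ 0 → j ≠ 1 → μ (bt n j) = 0

/-- The algebra `C₂(α)`: `[e₂, …, e_{n+1}] = α e₁ + e₂`, `[e₁, e₃, …, e_{n+1}] = e₂`. -/
def IsC2 (n : ℕ) (α : ℂ) (μ : AlternatingMap ℂ (nV n) (nV n) (Fin n)) : Prop :=
  μ (bt n 0) = α • sb n 0 + sb n 1 ∧ μ (bt n 1) = sb n 1 ∧
    ∀ j : Fin (n + 1), j ≠ 0 → j ≠ 1 → μ (bt n j) = 0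

/-- The algebra `C₃`: `[e₁, e₃, …, e_{n+1}] = e₁`, `[e₂, e₃, …, e_{n+1}] = e₂`. -/
def IsC3 (n : ℕ) (μ : AlternatingMap ℂ (nV n) (nV n) (Fin n)) : Prop :=
  μ (bt n 1) = sb n 0 ∧ μ (bt n 0) = sb n 1 ∧
    ∀ j : Fin (n + 1), j ≠ 0 → j ≠ 1 → μ (bt n j) = 0

/-- The algebra `D_r`: `[e₁, …, e_{i-1}, e_{i+1}, …, e_{n+1}] = e_i` for `1 ≤ i ≤ r`
(0-indexed: the tuple omitting `e j` maps to `e j` for `j < r` and to `0` otherwise). -/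
def IsD (n r : ℕ) (μ : AlternatingMap ℂ (nV n) (nV n) (Fin n)) : Prop :=
  ∀ j : Fin (n + 1), ((j : ℕ) < r → μ (bt n j) = sb n j) ∧ (r ≤ (j : ℕ) → μ (bt n j) = 0)

/-- The subspace `W = span{e₁, …, e_r}` of `V`. -/
noncomputable def flagW (n r : ℕ) (hrn : r ≤ n + 1) : Submodule ℂ (nV n) :=
  span ℂ (Set.range fun i : Fin r => sb n (Fin.castLE hrn i))

/-- The matrix `S_r = diag(1, -1, …, (-1)^{r-1})`. -/
noncomputable def Smat (r : ℕ) : Matrix (Fin r) (Fin r) ℂ :=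
  Matrix.diagonal fun i : Fin r => (-1 : ℂ) ^ (i : ℕ)

/-- The matrix of `φ` restricted to `W = span{e₁, …, e_r}` in the basis `e₁, …, e_r`
(meaningful once `φ` maps `W` into itself). -/
noncomputable def restrMat (n r : ℕ) (hrn : r ≤ n + 1) (φ : nV n ≃ₗ[ℂ] nV n) : Matrix (Fin r) (Fin r) ℂ :=
  Matrix.of fun i j : Fin r => φ (sb n (Fin.castLE hrn j)) (Fin.castLE hrn i)

namespace AutDr
open Matrix

lemma alt_sum_apply {ι M R N : Type*} [Fintype ι] [CommRing R] [AddCommGroup M] [Module R M]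
    [AddCommGroup N] [Module R N] {κ : Type*}
    (s : Finset κ) (f : κ → AlternatingMap R M N ι) (x : ι → M) :
    (∑ i ∈ s, f i) x = ∑ i ∈ s, f i x := by
  induction s using Finset.cons_induction with
  | empty => simp
  | cons a s ha ih => simp [Finset.sum_cons, ih]

lemma sb_apply (n : ℕ) (j k : Fin (n+1)) : sb n j k = if k = j then 1 else 0 := by
  simp [sb, Pi.single_apply]

noncomputable def Mmat (n : ℕ) (φ : nV n ≃ₗ[ℂ] nV n) : Matrix (Fin (n+1)) (Fin (n+1)) ℂ :=
  Matrix.of fun k l => φ (sb n l) k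

lemma factor_injective {n : ℕ} (v : Fin n → Fin (n+1)) (hv : Function.Injective v) :
    ∃ (j : Fin (n+1)) (σ : Equiv.Perm (Fin n)), ∀ k, v k = j.succAbove (σ k) := by
  have hns : ¬ Function.Surjective v := by
    intro hs
    have := Fintype.card_le_of_surjective v hs
    simp at this
  unfold Function.Surjective at hns
  push_neg at hns
  obtain ⟨j, hj⟩ := hns
  choose t ht using fun k => Fin.exists_succAbove_eq (hj k)
  have htinj : Function.Injective t := by
    intro a b hab
    apply hv
    rw [← ht a, ← ht b, hab]
  exact ⟨j, Equiv.ofBijective t (Finite.injective_iff_bijective.mp htinj),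
    fun k => (ht k).symm⟩

noncomputable def Dmap (n : ℕ) (j : Fin (n+1)) : AlternatingMap ℂ (nV n) ℂ (Fin n) :=
  (Matrix.detRowAlternating : AlternatingMap ℂ (Fin n → ℂ) ℂ (Fin n)).compLinearMap
    (LinearMap.funLeft ℂ ℂ j.succAbove)

lemma Dmap_apply (n : ℕ) (j : Fin (n+1)) (x : Fin n → nV n) :
    Dmap n j x = Matrix.det (Matrix.of fun i k => x i (j.succAbove k)) := rfl

lemma Dmap_bt (n : ℕ) (j j' : Fin (n+1)) :
    Dmap n j' (bt n j) = if j = j' then 1 else 0 := by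
  rw [Dmap_apply]
  split_ifs with h
  · subst h
    have : (Matrix.of fun i k => bt n j i (j.succAbove k)) = (1 : Matrix (Fin n) (Fin n) ℂ) := by
      ext i k
      simp only [Matrix.of_apply, bt, sb_apply, Matrix.one_apply]
      have : j.succAbove k = j.succAbove i ↔ i = k := by
        rw [Fin.succAbove_right_inj]; exact eq_comm
      simp [this]
    rw [this, Matrix.det_one]
  · obtain ⟨i₀, hi₀⟩ := Fin.exists_succAbove_eq (show j' ≠ j from Ne.symm h)
    apply Matrix.det_eq_zero_of_row_eq_zero i₀
    intro k
    simp only [Matrix.of_apply, bt, hi₀, sb_apply]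
    exact if_neg (Fin.succAbove_ne j' k)

noncomputable def nuMap (n r : ℕ) : AlternatingMap ℂ (nV n) (nV n) (Fin n) :=
  ∑ j : Fin (n+1), if (j : ℕ) < r then
    (LinearMap.toSpanSingleton ℂ (nV n) (sb n j)).compAlternatingMap (Dmap n j) else 0

lemma nuMap_apply (n r : ℕ) (x : Fin n → nV n) :
    nuMap n r x = ∑ j : Fin (n+1), (if (j : ℕ) < r then Dmap n j x else 0) • sb n j := by
  rw [nuMap, alt_sum_apply]
  refine Finset.sum_congr rfl fun j _ => ?_
  split_ifs with h
  · simp [LinearMap.toSpanSingleton_apply]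
  · simp

lemma Dmap_phi_bt (n : ℕ) (φ : nV n ≃ₗ[ℂ] nV n) (j j' : Fin (n+1)) :
    Dmap n j' (fun k => φ (bt n j k)) =
      Matrix.det ((Mmat n φ).submatrix j'.succAbove j.succAbove) := by
  rw [Dmap_apply, ← Matrix.det_transpose ((Mmat n φ).submatrix j'.succAbove j.succAbove)]
  rfl

lemma nuMap_bt (n r : ℕ) (j : Fin (n+1)) :
    nuMap n r (bt n j) = if (j : ℕ) < r then sb n j else 0 := by
  rw [nuMap_apply]
  rw [Finset.sum_eq_single j]
  · rw [Dmap_bt, if_pos rfl]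
    split_ifs with h <;> simp
  · intro j' _ hj'
    rw [Dmap_bt, if_neg (Ne.symm hj')]
    split_ifs <;> simp
  · simp

lemma nuMap_eq {n r : ℕ} {μ : AlternatingMap ℂ (nV n) (nV n) (Fin n)} (hμ : IsD n r μ) :
    μ = nuMap n r := by
  refine (Pi.basisFun ℂ (Fin (n+1))).ext_alternating fun v hv => ?_
  obtain ⟨j, σ, hvs⟩ := factor_injective v hv
  have hbt : (fun i => (Pi.basisFun ℂ (Fin (n+1))) (v i)) = fun i => bt n j (σ i) := by
    funext i
    rw [hvs]
    simp [bt, sb, Pi.basisFun_apply]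
  rw [hbt]
  have h1 : μ (fun i => bt n j (σ i)) = Equiv.Perm.sign σ • μ (bt n j) := μ.map_perm (bt n j) σ
  have h2 : nuMap n r (fun i => bt n j (σ i)) = Equiv.Perm.sign σ • nuMap n r (bt n j) :=
    (nuMap n r).map_perm (bt n j) σ
  rw [h1, h2, nuMap_bt]
  rcases lt_or_ge (j : ℕ) r with h | h
  · rw [(hμ j).1 h, if_pos h]
  · rw [(hμ j).2 h, if_neg (not_lt.mpr h)]

lemma sum_smul_sb_apply (n : ℕ) (c : Fin (n+1) → ℂ) (k : Fin (n+1)) :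
    (∑ j' : Fin (n+1), c j' • sb n j') k = c k := by
  rw [Finset.sum_apply]
  rw [Finset.sum_eq_single k]
  · simp [sb_apply]
  · intro j' _ hj'
    simp [sb_apply, if_neg (Ne.symm hj')]
  · simp

lemma mem_flagW_iff {n r : ℕ} (hrn : r ≤ n + 1) (x : nV n) :
    x ∈ flagW n r hrn ↔ ∀ k : Fin (n + 1), r ≤ (k : ℕ) → x k = 0 := by
  constructor
  · intro hx
    induction hx using Submodule.span_induction with
    | mem y hy =>
      obtain ⟨i, rfl⟩ := hy
      intro k hk
      show sb n (Fin.castLE hrn i) k = 0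
      rw [sb_apply, if_neg]
      intro hke
      rw [hke] at hk
      simp only [Fin.coe_castLE] at hk
      omega
    | zero => simp
    | add y z _ _ hy hz => intro k hk; simp [hy k hk, hz k hk]
    | smul a y _ hy => intro k hk; simp [hy k hk]
  · intro hx
    have hxe : x = ∑ i : Fin r, x (Fin.castLE hrn i) • sb n (Fin.castLE hrn i) := by
      funext k
      rw [Finset.sum_apply]
      rcases lt_or_ge (k : ℕ) r with hk | hk
      · rw [Finset.sum_eq_single (⟨(k : ℕ), hk⟩ : Fin r)]
        · have : Fin.castLE hrn ⟨(k : ℕ), hk⟩ = k := by ext; rfl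
          simp [this, sb_apply]
        · intro i _ hi
          have : k ≠ Fin.castLE hrn i := by
            intro hke
            apply hi
            ext
            have := congrArg Fin.val hke
            simpa using this.symm
          simp [sb_apply, if_neg this]
        · simp
      · rw [hx k hk]
        symm
        apply Finset.sum_eq_zero
        intro i _
        have : k ≠ Fin.castLE hrn i := by
          intro hke
          have := congrArg Fin.val hke
          simp only [Fin.coe_castLE] at this
          omega
        simp [sb_apply, if_neg this]
    rw [hxe]
    exact Submodule.sum_mem _ fun i _ =>
      Submodule.smul_mem _ _ (Submodule.subset_span ⟨i, rfl⟩)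

lemma aut_iff_C {n r : ℕ} {μ : AlternatingMap ℂ (nV n) (nV n) (Fin n)} (hμ : IsD n r μ)
    (φ : nV n ≃ₗ[ℂ] nV n) :
    (∀ x : Fin n → nV n, φ (μ x) = μ fun i => φ (x i)) ↔
      ∀ j k : Fin (n+1),
        (if (j : ℕ) < r then Mmat n φ k j else 0) =
          (if (k : ℕ) < r then Matrix.det ((Mmat n φ).submatrix k.succAbove j.succAbove)
            else 0) := by
  have key : ∀ j : Fin (n+1),
      (φ (μ (bt n j)) = μ fun i => φ (bt n j i)) ↔
      ∀ k : Fin (n+1),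
        (if (j : ℕ) < r then Mmat n φ k j else 0) =
          (if (k : ℕ) < r then Matrix.det ((Mmat n φ).submatrix k.succAbove j.succAbove)
            else 0) := by
    intro j
    have hL : φ (μ (bt n j)) = fun k => if (j : ℕ) < r then Mmat n φ k j else 0 := by
      rcases lt_or_ge (j : ℕ) r with h | h
      · rw [(hμ j).1 h]
        funext k
        rw [if_pos h]
        rfl
      · rw [(hμ j).2 h]
        funext k
        rw [if_neg (not_lt.mpr h)]
        simp
    have hR : (μ fun i => φ (bt n j i)) = fun k : Fin (n+1) =>
        if (k : ℕ) < r then Matrix.det ((Mmat n φ).submatrix k.succAbove j.succAbove)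
          else 0 := by
      rw [nuMap_eq hμ, nuMap_apply]
      funext k
      have := sum_smul_sb_apply n
        (fun j' => if (j' : ℕ) < r then Dmap n j' (fun i => φ (bt n j i)) else 0) k
      rw [this, Dmap_phi_bt]
    rw [hL, hR, funext_iff]
  constructor
  · intro H j
    exact (key j).mp (H (bt n j))
  · intro H x
    have : (φ.toLinearMap).compAlternatingMap μ = μ.compLinearMap (φ.toLinearMap) := by
      refine (Pi.basisFun ℂ (Fin (n+1))).ext_alternating fun v hv => ?_
      obtain ⟨j, σ, hvs⟩ := factor_injective v hv
      have hbt : (fun i => (Pi.basisFun ℂ (Fin (n+1))) (v i)) = fun i => bt n j (σ i) := by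
        funext i
        rw [hvs]
        simp [bt, sb, Pi.basisFun_apply]
      rw [hbt]
      have h1 := ((φ.toLinearMap).compAlternatingMap μ).map_perm (bt n j) σ
      have h2 := (μ.compLinearMap (φ.toLinearMap)).map_perm (bt n j) σ
      rw [show ((fun i => bt n j (σ i)) : Fin n → nV n) = (bt n j) ∘ σ from rfl, h1, h2]
      congr 1
      have h3 : (φ.toLinearMap).compAlternatingMap μ (bt n j) = φ (μ (bt n j)) := rfl
      have h4 : μ.compLinearMap (φ.toLinearMap) (bt n j) = μ fun i => φ (bt n j i) := rfl
      rw [h3, h4]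
      exact (key j).mpr (H j)
    have := congrArg (fun f => f x) (congrArg DFunLike.coe this)
    simpa using this


variable {n : ℕ}

noncomputable def Atil (n r : ℕ) : Matrix (Fin (n+1)) (Fin (n+1)) ℂ :=
  Matrix.diagonal fun k => if (k : ℕ) < r then (-1 : ℂ) ^ (k : ℕ) else 0

noncomputable def Emat (n : ℕ) : Matrix (Fin (n+1)) (Fin (n+1)) ℂ :=
  Matrix.diagonal fun k => (-1 : ℂ) ^ (k : ℕ)

noncomputable def Pmat (n r : ℕ) : Matrix (Fin (n+1)) (Fin (n+1)) ℂ :=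
  Matrix.diagonal fun k => if (k : ℕ) < r then (1 : ℂ) else 0

lemma PE (r : ℕ) : Pmat n r * Emat n = Atil n r := by
  rw [Pmat, Emat, Atil, Matrix.diagonal_mul_diagonal]
  refine congrArg Matrix.diagonal (funext fun k => ?_)
  split_ifs <;> simp

lemma EE : Emat n * Emat n = 1 := by
  rw [Emat, Matrix.diagonal_mul_diagonal, ← Matrix.diagonal_one]
  refine congrArg Matrix.diagonal (funext fun k => ?_)
  rw [← mul_pow]
  norm_num

lemma AE (r : ℕ) : Atil n r * Emat n = Pmat n r := by
  rw [← PE, Matrix.mul_assoc, EE, Matrix.mul_one]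

lemma sign_cancel (a b : ℕ) (m : ℂ) : (-1)^a * ((-1) ^ (a + b) * m) * (-1)^b = m := by
  rw [pow_add]
  calc (-1:ℂ)^a * ((-1)^a * (-1)^b * m) * (-1)^b
      = ((-1:ℂ)^a * (-1)^a) * ((-1)^b * (-1)^b) * m := by ring
    _ = m := by rw [← mul_pow, ← mul_pow]; norm_num

lemma entryR (r : ℕ) (M : Matrix (Fin (n+1)) (Fin (n+1)) ℂ) (k j : Fin (n+1)) :
    (Atil n r * (Matrix.adjugate M)ᵀ * Emat n) k j =
      if (k : ℕ) < r then Matrix.det (M.submatrix k.succAbove j.succAbove) else 0 := by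
  rw [Emat, Atil, Matrix.mul_diagonal, Matrix.diagonal_mul, Matrix.transpose_apply,
    Matrix.adjugate_fin_succ_eq_det_submatrix]
  split_ifs with hk
  · exact sign_cancel _ _ _
  · simp

lemma entryL (r : ℕ) (M : Matrix (Fin (n+1)) (Fin (n+1)) ℂ) (k j : Fin (n+1)) :
    (M * Pmat n r) k j = if (j : ℕ) < r then M k j else 0 := by
  rw [Pmat, Matrix.mul_diagonal]
  split_ifs <;> simp

lemma C_iff_adj (r : ℕ) (M : Matrix (Fin (n+1)) (Fin (n+1)) ℂ) :
    (∀ j k : Fin (n+1),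
        (if (j : ℕ) < r then M k j else 0) =
          (if (k : ℕ) < r then Matrix.det (M.submatrix k.succAbove j.succAbove) else 0)) ↔
      M * Pmat n r = Atil n r * (Matrix.adjugate M)ᵀ * Emat n := by
  rw [← Matrix.ext_iff]
  constructor
  · intro H k j
    rw [entryL, entryR]
    exact H j k
  · intro H j k
    rw [← entryL r M, ← entryR r M, H k j]

lemma adj_iff_full (r : ℕ) (M : Matrix (Fin (n+1)) (Fin (n+1)) ℂ) (hdet : M.det ≠ 0) :
    M * Pmat n r = Atil n r * (Matrix.adjugate M)ᵀ * Emat n ↔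
      M * Atil n r * Mᵀ = M.det • Atil n r := by
  constructor
  · intro H
    calc M * Atil n r * Mᵀ = M * Pmat n r * (Emat n * Mᵀ) := by
          rw [← PE, Matrix.mul_assoc, Matrix.mul_assoc, Matrix.mul_assoc]
      _ = Atil n r * (Matrix.adjugate M)ᵀ * Emat n * (Emat n * Mᵀ) := by rw [H]
      _ = Atil n r * (Matrix.adjugate M)ᵀ * Mᵀ := by
          rw [Matrix.mul_assoc (Atil n r * (Matrix.adjugate M)ᵀ), ← Matrix.mul_assoc (Emat n),
            EE, Matrix.one_mul]
      _ = Atil n r * (M * Matrix.adjugate M)ᵀ := by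
          rw [Matrix.transpose_mul, Matrix.mul_assoc]
      _ = M.det • Atil n r := by
          rw [Matrix.mul_adjugate, Matrix.transpose_smul, Matrix.transpose_one,
            Matrix.mul_smul, Matrix.mul_one]
  · intro H
    have key : M.det • (M * Atil n r) = M.det • (Atil n r * (Matrix.adjugate M)ᵀ) := by
      calc M.det • (M * Atil n r) = M * Atil n r * (Mᵀ * Matrix.adjugate Mᵀ) := by
            rw [Matrix.mul_adjugate, Matrix.det_transpose, Matrix.mul_smul, Matrix.mul_one]
        _ = M * Atil n r * Mᵀ * Matrix.adjugate Mᵀ := by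
            rw [Matrix.mul_assoc, Matrix.mul_assoc, Matrix.mul_assoc]
        _ = (M.det • Atil n r) * Matrix.adjugate Mᵀ := by rw [H]
        _ = M.det • (Atil n r * (Matrix.adjugate M)ᵀ) := by
            rw [Matrix.smul_mul, Matrix.adjugate_transpose]
    have h2 : M * Atil n r = Atil n r * (Matrix.adjugate M)ᵀ :=
      smul_right_injective _ hdet key
    calc M * Pmat n r = M * Atil n r * Emat n := by rw [← AE, Matrix.mul_assoc]
      _ = Atil n r * (Matrix.adjugate M)ᵀ * Emat n := by rw [h2]


lemma Mmat_det {n : ℕ} (φ : nV n ≃ₗ[ℂ] nV n) :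
    (Mmat n φ).det = LinearMap.det (φ : nV n →ₗ[ℂ] nV n) := by
  have : Mmat n φ = LinearMap.toMatrix (Pi.basisFun ℂ (Fin (n+1)))
      (Pi.basisFun ℂ (Fin (n+1))) (φ : nV n →ₗ[ℂ] nV n) := by
    ext k l
    rw [LinearMap.toMatrix_apply, Pi.basisFun_apply, Pi.basisFun_repr]
    rfl
  rw [this, LinearMap.det_toMatrix]

lemma det_eq {n r : ℕ} (hrn : r ≤ n + 1) (φ : nV n ≃ₗ[ℂ] nV n)
    (h : flagW n r hrn ≤ (flagW n r hrn).comap (φ : nV n →ₗ[ℂ] nV n)) :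
    (Mmat n φ).det = (restrMat n r hrn φ).det *
      LinearMap.det ((flagW n r hrn).mapQ (flagW n r hrn) (φ : nV n →ₗ[ℂ] nV n) h) := by
  set W := flagW n r hrn with hW
  set s := n + 1 - r with hs
  have hrs : r + s = n + 1 := by omega
  let e : Fin r ⊕ Fin s ≃ Fin (n+1) := finSumFinEquiv.trans (finCongr hrs)
  have heinl : ∀ i : Fin r, e (Sum.inl i) = Fin.castLE hrn i := by
    intro i; ext; simp [e]
  have heinr : ∀ i : Fin s, ((e (Sum.inr i)) : ℕ) = r + i := by
    intro i; simp [e]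
  have hgen : ∀ l : Fin (n+1), (l : ℕ) < r → φ (sb n l) ∈ W := by
    intro l hl
    apply h
    exact Submodule.subset_span ⟨⟨(l : ℕ), hl⟩, congrArg (sb n) (Fin.ext rfl)⟩
  have hM0 : ∀ (k l : Fin (n+1)), r ≤ (k : ℕ) → (l : ℕ) < r → Mmat n φ k l = 0 := by
    intro k l hk hl
    exact (mem_flagW_iff hrn _).1 (hgen l hl) k hk
  set Z : Matrix (Fin s) (Fin s) ℂ :=
    Matrix.of (fun i j => Mmat n φ (e (Sum.inr i)) (e (Sum.inr j))) with hZ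
  set X : Matrix (Fin r) (Fin s) ℂ :=
    Matrix.of (fun i j => Mmat n φ (e (Sum.inl i)) (e (Sum.inr j))) with hX
  have hsub : (Mmat n φ).submatrix e e = Matrix.fromBlocks (restrMat n r hrn φ) X 0 Z := by
    ext i j
    cases i with
    | inl i =>
      cases j with
      | inl j =>
        show Mmat n φ (e (Sum.inl i)) (e (Sum.inl j)) = restrMat n r hrn φ i j
        rw [heinl, heinl]
        rfl
      | inr j => rfl
    | inr i =>
      cases j with
      | inl j =>
        show Mmat n φ (e (Sum.inr i)) (e (Sum.inl j)) = 0
        apply hM0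
        · rw [heinr]; omega
        · rw [heinl]; simp
      | inr j => rfl
  have hdet1 : (Mmat n φ).det = (restrMat n r hrn φ).det * Z.det := by
    rw [← Matrix.det_submatrix_equiv_self e, hsub, Matrix.det_fromBlocks_zero₂₁]
  let p : nV n →ₗ[ℂ] (Fin s → ℂ) := LinearMap.funLeft ℂ ℂ (fun i : Fin s => e (Sum.inr i))
  have hWp : W ≤ LinearMap.ker p := by
    intro x hx
    rw [LinearMap.mem_ker]
    funext i
    exact (mem_flagW_iff hrn x).1 hx _ (by rw [heinr]; omega)
  set q₀ := W.liftQ p hWp with hq₀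
  let s₀ : (Fin s → ℂ) →ₗ[ℂ] nV n := {
    toFun := fun y k => Sum.elim (fun _ => (0:ℂ)) y (e.symm k)
    map_add' := by intro y z; funext k; cases hk : e.symm k <;> simp [hk]
    map_smul' := by intro c y; funext k; cases hk : e.symm k <;> simp [hk] }
  have hps : ∀ y, p (s₀ y) = y := by
    intro y; funext i
    show Sum.elim (fun _ => (0:ℂ)) y (e.symm (e (Sum.inr i))) = y i
    rw [Equiv.symm_apply_apply]
    rfl
  have hker : LinearMap.ker p ≤ W := by
    intro x hx
    rw [LinearMap.mem_ker] at hx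
    rw [mem_flagW_iff hrn]
    intro k hk
    rcases hsk : e.symm k with a | b
    · exfalso
      have hke : k = e (Sum.inl a) := by rw [← hsk, Equiv.apply_symm_apply]
      rw [hke] at hk
      rw [heinl] at hk
      simp only [Fin.coe_castLE] at hk
      have := a.isLt
      omega
    · have hke : k = e (Sum.inr b) := by rw [← hsk, Equiv.apply_symm_apply]
      rw [hke]
      exact congrFun hx b
  have hqinj : Function.Injective q₀ := by
    rw [← LinearMap.ker_eq_bot]
    exact Submodule.ker_liftQ_eq_bot _ _ _ hker
  have hqsurj : Function.Surjective q₀ :=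
    fun y => ⟨Submodule.Quotient.mk (s₀ y), by rw [hq₀, Submodule.liftQ_apply]; exact hps y⟩
  let q : (nV n ⧸ W) ≃ₗ[ℂ] (Fin s → ℂ) := LinearEquiv.ofBijective q₀ ⟨hqinj, hqsurj⟩
  have hs0 : ∀ y, s₀ y = ∑ j : Fin s, y j • sb n (e (Sum.inr j)) := by
    intro y
    funext k
    rw [Finset.sum_apply]
    show Sum.elim (fun _ => (0:ℂ)) y (e.symm k) = _
    rcases hsk : e.symm k with a | b
    · have hk : ∀ j, k ≠ e (Sum.inr j) := by
        intro j hkj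
        rw [hkj, Equiv.symm_apply_apply] at hsk
        exact absurd hsk (by simp)
      symm
      apply Finset.sum_eq_zero
      intro j _
      simp [sb_apply, if_neg (hk j)]
    · have hke : k = e (Sum.inr b) := by rw [← hsk, Equiv.apply_symm_apply]
      rw [Finset.sum_eq_single b]
      · simp [sb_apply, hke]
      · intro j _ hj
        have hne : k ≠ e (Sum.inr j) := by
          rw [hke]
          intro hh
          exact hj (Sum.inr.inj (e.injective hh)).symm
        simp [sb_apply, if_neg hne]
      · simp
  have hcomp : (q : (nV n ⧸ W) →ₗ[ℂ] (Fin s → ℂ)) ∘ₗ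
      ((W.mapQ W (φ : nV n →ₗ[ℂ] nV n) h) ∘ₗ (q.symm : (Fin s → ℂ) →ₗ[ℂ] (nV n ⧸ W))) =
      Matrix.toLin' Z := by
    apply LinearMap.ext
    intro y
    have hsymm : q.symm y = Submodule.Quotient.mk (s₀ y) := by
      rw [LinearEquiv.symm_apply_eq]
      symm
      show q₀ (Submodule.Quotient.mk (s₀ y)) = y
      rw [hq₀, Submodule.liftQ_apply]
      exact hps y
    show q₀ ((W.mapQ W (φ : nV n →ₗ[ℂ] nV n) h) (q.symm y)) = Matrix.toLin' Z y
    rw [hsymm, Submodule.mapQ_apply, hq₀, Submodule.liftQ_apply, Matrix.toLin'_apply]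
    funext i
    show (φ ((s₀ y))) (e (Sum.inr i)) = Z.mulVec y i
    rw [hs0, map_sum, Finset.sum_apply]
    simp_rw [_root_.map_smul]
    simp only [Matrix.mulVec, dotProduct, hZ, Matrix.of_apply, Mmat]
    refine Finset.sum_congr rfl fun j _ => ?_
    simp [mul_comm]
  have hdet2 : LinearMap.det ((flagW n r hrn).mapQ (flagW n r hrn) (φ : nV n →ₗ[ℂ] nV n) h)
      = Z.det := by
    rw [← LinearMap.det_toLin' Z, ← hcomp, ← LinearMap.comp_assoc]
    exact (LinearMap.det_conj _ q).symm
  rw [hdet1, hdet2]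


lemma mul_diag_mul_entry {m : Type*} [Fintype m] [DecidableEq m] (A : Matrix m m ℂ)
    (d : m → ℂ) (k j : m) :
    (A * Matrix.diagonal d * Aᵀ) k j = ∑ l, A k l * d l * A j l := by
  rw [Matrix.mul_apply]
  refine Finset.sum_congr rfl fun l _ => ?_
  rw [Matrix.mul_diagonal, Matrix.transpose_apply]

lemma Atil_apply (n r : ℕ) (k j : Fin (n+1)) :
    Atil n r k j = if k = j then (if (k : ℕ) < r then (-1 : ℂ) ^ (k : ℕ) else 0) else 0 := by
  rw [Atil, Matrix.diagonal_apply]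

lemma Smat_apply (r : ℕ) (k j : Fin r) :
    Smat r k j = if k = j then (-1 : ℂ) ^ (k : ℕ) else 0 := by
  rw [Smat, Matrix.diagonal_apply]

lemma Atil_cast {n r : ℕ} (hrn : r ≤ n + 1) (k j : Fin r) :
    Atil n r (Fin.castLE hrn k) (Fin.castLE hrn j) = Smat r k j := by
  rw [Atil_apply, Smat_apply]
  by_cases hkj : k = j
  · subst hkj
    rw [if_pos rfl, if_pos rfl, if_pos (by simpa using k.isLt)]
    rfl
  · rw [if_neg hkj, if_neg (fun hc => hkj (Fin.castLE_injective hrn hc))]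

lemma Mzero {n r : ℕ} (hrn : r ≤ n + 1) (φ : nV n ≃ₗ[ℂ] nV n)
    (h : flagW n r hrn ≤ (flagW n r hrn).comap (φ : nV n →ₗ[ℂ] nV n))
    (k l : Fin (n+1)) (hk : r ≤ (k : ℕ)) (hl : (l : ℕ) < r) : Mmat n φ k l = 0 := by
  have hgen : φ (sb n l) ∈ flagW n r hrn := by
    apply h
    exact Submodule.subset_span ⟨⟨(l : ℕ), hl⟩, congrArg (sb n) (Fin.ext rfl)⟩
  exact (mem_flagW_iff hrn _).1 hgen k hk

lemma block_eq {n r : ℕ} (hrn : r ≤ n + 1) (φ : nV n ≃ₗ[ℂ] nV n) (k j : Fin r) :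
    (Mmat n φ * Atil n r * (Mmat n φ)ᵀ) (Fin.castLE hrn k) (Fin.castLE hrn j) =
      (restrMat n r hrn φ * Smat r * (restrMat n r hrn φ)ᵀ) k j := by
  rw [Atil, Smat, mul_diag_mul_entry, mul_diag_mul_entry]
  rw [← Finset.sum_subset (Finset.subset_univ (Finset.univ.image (Fin.castLE hrn)))
    (fun l _ hl => ?_)]
  · rw [Finset.sum_image (fun a _ b _ hab => Fin.castLE_injective hrn hab)]
    refine Finset.sum_congr rfl fun l _ => ?_
    rw [if_pos (by simpa using l.isLt)]
    rfl
  · have hnl : ¬ (l : ℕ) < r := by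
      intro hlr
      exact hl (Finset.mem_image.mpr ⟨⟨(l : ℕ), hlr⟩, Finset.mem_univ _, Fin.ext rfl⟩)
    rw [if_neg hnl]
    ring

end AutDr

/-- For `3 ≤ r ≤ n+1`, an invertible linear map `φ` is an automorphism of
`D_r` iff `φ` maps `W = span{e₁, …, e_r}` into itself and, with `U` the matrix of `φ`
restricted to `W` in the basis `e₁, …, e_r` and `w` the determinant of the endomorphism of
`V ⧸ W` induced by `φ`, one has `U Sᵣ Uᵀ = det(U) · w · Sᵣ`. -/
theorem automorphisms_of_Dr (n : ℕ) (hn : 2 ≤ n) (r : ℕ) (hr3 : 3 ≤ r) (hrn : r ≤ n + 1)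
    (μ : AlternatingMap ℂ (nV n) (nV n) (Fin n)) (hμ : IsD n r μ)
    (φ : nV n ≃ₗ[ℂ] nV n) :
    (∀ x : Fin n → nV n, φ (μ x) = μ fun i => φ (x i)) ↔
      ∃ h : flagW n r hrn ≤ (flagW n r hrn).comap (φ : nV n →ₗ[ℂ] nV n),
        restrMat n r hrn φ * Smat r * (restrMat n r hrn φ).transpose =
          ((restrMat n r hrn φ).det *
              LinearMap.det
                ((flagW n r hrn).mapQ (flagW n r hrn) (φ : nV n →ₗ[ℂ] nV n) h)) •
            Smat r := by
  classical
  have hdetne : (AutDr.Mmat n φ).det ≠ 0 := by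
    rw [AutDr.Mmat_det]
    exact (LinearEquiv.isUnit_det' φ).ne_zero
  rw [AutDr.aut_iff_C hμ φ]
  constructor
  · intro HC
    have h : flagW n r hrn ≤ (flagW n r hrn).comap (φ : nV n →ₗ[ℂ] nV n) := by
      refine Submodule.span_le.mpr ?_
      rintro _ ⟨i, rfl⟩
      rw [SetLike.mem_coe, Submodule.mem_comap]
      rw [AutDr.mem_flagW_iff hrn]
      intro k hk
      have hC := HC (Fin.castLE hrn i) k
      rw [if_pos (by simpa using i.isLt), if_neg (not_lt.mpr hk)] at hC
      exact hC
    refine ⟨h, ?_⟩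
    have Hfull : AutDr.Mmat n φ * AutDr.Atil n r * (AutDr.Mmat n φ).transpose =
        (AutDr.Mmat n φ).det • AutDr.Atil n r :=
      (AutDr.adj_iff_full r _ hdetne).mp ((AutDr.C_iff_adj r _).mp HC)
    have hdet := AutDr.det_eq hrn φ h
    ext k j
    rw [← AutDr.block_eq hrn φ k j, Hfull, Matrix.smul_apply, Matrix.smul_apply,
      AutDr.Atil_cast hrn, smul_eq_mul, smul_eq_mul, ← hdet]
  · rintro ⟨h, Hblk⟩
    have Hfull : AutDr.Mmat n φ * AutDr.Atil n r * (AutDr.Mmat n φ).transpose =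
        (AutDr.Mmat n φ).det • AutDr.Atil n r := by
      ext k j
      by_cases hk : (k : ℕ) < r
      · by_cases hj : (j : ℕ) < r
        · have hkc : k = Fin.castLE hrn ⟨(k : ℕ), hk⟩ := Fin.ext rfl
          have hjc : j = Fin.castLE hrn ⟨(j : ℕ), hj⟩ := Fin.ext rfl
          rw [hkc, hjc, AutDr.block_eq hrn φ, Hblk, Matrix.smul_apply, Matrix.smul_apply,
            AutDr.Atil_cast hrn, smul_eq_mul, smul_eq_mul, AutDr.det_eq hrn φ h]
        · rw [Matrix.smul_apply, AutDr.Atil_apply,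
            if_neg (fun hc : k = j => hj (hc ▸ hk)), smul_zero, AutDr.Atil,
            AutDr.mul_diag_mul_entry]
          refine Finset.sum_eq_zero fun l _ => ?_
          by_cases hl : (l : ℕ) < r
          · rw [AutDr.Mzero hrn φ h j l (not_lt.mp hj) hl, mul_zero]
          · rw [if_neg hl, mul_zero, zero_mul]
      · have hz : (if k = j then (if (k : ℕ) < r then (-1 : ℂ) ^ (k : ℕ) else 0) else 0) = 0 := by
          split_ifs <;> simp_all
        rw [Matrix.smul_apply, AutDr.Atil_apply, hz, smul_zero, AutDr.Atil,
          AutDr.mul_diag_mul_entry]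
        refine Finset.sum_eq_zero fun l _ => ?_
        by_cases hl : (l : ℕ) < r
        · rw [AutDr.Mzero hrn φ h k l (not_lt.mp hk) hl, zero_mul, zero_mul]
        · rw [if_neg hl, mul_zero, zero_mul]
    exact (AutDr.C_iff_adj r _).mpr ((AutDr.adj_iff_full r _ hdetne).mpr Hfull)
end

section
/- For every integer n ≥ 2, the algebra B has level one: the closure of the GL(V)-orbit of the structure of B equals the union of that orbit with the single point 0 (the zero multiplication). -/
open Function Submodule

/-! `B` is the map `x ↦ δ(x) e₁`, with `δ` the determinant of the last `n` coordinates, and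
`e₁` is annihilated by `δ`; hence `B(…, B(x), …) = 0`. Call an alternating map `f` with
`f(…, f(x), …) = 0` self-annihilating. This property is invariant under `GL(V)` and closed: the
alternating maps form a finite-dimensional, hence closed, subspace, and expanding `f(x)` in the
standard basis turns the condition into polynomial identities in the values of `f`. So it holds on
the closure of the orbit of `B`. Conversely, if `f` is self-annihilating and `f(x) ≠ 0`, then
`f(x), x₁, …, xₙ` is a basis in which `f` has the multiplication table of `B`. Finally, the scalar `t⁻¹ ∈ GL(V)` sends `B` to `tⁿ⁻¹ B`, which tends
to `0` as `t → 0` because `n ≥ 2`. -/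

namespace AlternatingMap

section CommSemiring

variable {R M ι : Type*} [CommSemiring R] [AddCommMonoid M] [Module R M]

theorem map_update_sum_smul_self {N : Type*} [AddCommMonoid N] [Module R N] {n : ℕ}
    (f : M [⋀^Fin n]→ₗ[R] N) (x : Fin n → M) (c : Fin n → R) (k : Fin n) :
    f (update x k (∑ m, c m • x m)) = c k • f x := by
  rw [f.map_update_sum, Finset.sum_eq_single k]
  · rw [f.map_update_smul, update_eq_self]
  · intro m _ hmk
    rw [f.map_update_smul, f.map_update_self x hmk.symm, smul_zero]
  · simp

theorem ext_succAbove {N : Type*} [AddCommGroup N] [Module R N] {n : ℕ}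
    (b : Module.Basis (Fin (n + 1)) R M) {f g : M [⋀^Fin n]→ₗ[R] N}
    (h : ∀ j : Fin (n + 1), f (b ∘ j.succAbove) = g (b ∘ j.succAbove)) : f = g := by
  refine b.ext_alternating fun v hv => ?_
  obtain ⟨j, hj⟩ : ∃ j, ∀ k, v k ≠ j := by
    by_contra! hsurj
    simpa using Fintype.card_le_of_surjective v hsurj
  choose σ hσ using fun k => Fin.exists_succAbove_eq (hj k)
  let e : Equiv.Perm (Fin n) :=
    Equiv.ofBijective σ (Finite.injective_iff_bijective.mp fun a b hab => hv (by
      rw [← hσ a, ← hσ b, hab]))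
  have hv_eq : (fun k => b (v k)) = (b ∘ j.succAbove) ∘ e := by
    funext k
    simp [e, hσ]
  rw [hv_eq, f.map_perm, g.map_perm, h]

def conj (g : M ≃ₗ[R] M) (f : M [⋀^ι]→ₗ[R] M) : M [⋀^ι]→ₗ[R] M :=
  g.toLinearMap.compAlternatingMap (f.compLinearMap g.symm.toLinearMap)

@[simp]
theorem conj_apply (g : M ≃ₗ[R] M) (f : M [⋀^ι]→ₗ[R] M) (x : ι → M) :
    f.conj g x = g (f (g.symm ∘ x)) :=
  rfl

variable [DecidableEq ι]

def IsSelfAnnihilating (f : M [⋀^ι]→ₗ[R] M) : Prop :=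
  ∀ (x y : ι → M) (i : ι), f (update y i (f x)) = 0

theorem IsSelfAnnihilating.conj {f : M [⋀^ι]→ₗ[R] M} (hf : f.IsSelfAnnihilating)
    (g : M ≃ₗ[R] M) : (f.conj g).IsSelfAnnihilating := by
  intro x y i
  rw [conj_apply, conj_apply, comp_update, LinearEquiv.symm_apply_apply, hf, g.map_zero]

end CommSemiring

theorem linearIndependent_cons_of_map_update_eq_zero {K M N : Type*} [Field K] [AddCommGroup M]
    [Module K M] [AddCommGroup N] [Module K N] {n : ℕ} (f : M [⋀^Fin n]→ₗ[K] N)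
    {x : Fin n → M} (hx : f x ≠ 0) {w : M} (hw : w ≠ 0) (hwf : ∀ k, f (update x k w) = 0) :
    LinearIndependent K (Fin.cons w x : Fin (n + 1) → M) := by
  refine linearIndependent_finCons.mpr ⟨not_not.mp fun h => hx (f.map_linearDependent x h), ?_⟩
  intro hw_mem
  obtain ⟨c, rfl⟩ := (Submodule.mem_span_range_iff_exists_fun K).mp hw_mem
  have hc : c = 0 := funext fun k => by
    simpa [f.map_update_sum_smul_self, hx] using hwf k
  simp [hc] at hw

end AlternatingMap

section

variable {n : ℕ}

theorem bt_eq (j : Fin (n + 1)) : bt n j = Pi.basisFun ℂ (Fin (n + 1)) ∘ j.succAbove := by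
  funext k
  simp [bt, sb]

theorem sum_smul_sb (u : nV n) : ∑ k, u k • sb n k = u := by
  simpa [sb] using (Pi.basisFun ℂ (Fin (n + 1))).sum_repr u

theorem AlternatingMap.map_update_eq_sum_sb {N : Type*} [AddCommGroup N] [Module ℂ N]
    (f : nV n [⋀^Fin n]→ₗ[ℂ] N) (y : Fin n → nV n) (i : Fin n) (u : nV n) :
    f (update y i u) = ∑ k, u k • f (update y i (sb n k)) := by
  conv_lhs => rw [← sum_smul_sb u]
  simp only [f.map_update_sum, f.map_update_smul]

noncomputable def tailDet (n : ℕ) : nV n [⋀^Fin n]→ₗ[ℂ] ℂ :=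
  Matrix.detRowAlternating.compLinearMap (LinearMap.funLeft ℂ ℂ Fin.succ)

theorem tailDet_apply (x : Fin n → nV n) :
    tailDet n x = (Matrix.of fun k i => x k i.succ).det :=
  rfl

theorem tailDet_eq_zero_of_eq_sb_zero {x : Fin n → nV n} {k : Fin n} (hk : x k = sb n 0) :
    tailDet n x = 0 := by
  rw [tailDet_apply]
  refine Matrix.det_eq_zero_of_row_eq_zero k fun i => ?_
  simp [hk, sb, Fin.succ_ne_zero]

theorem tailDet_bt_zero : tailDet n (bt n 0) = 1 := by
  rw [tailDet_apply, ← Matrix.det_one (n := Fin n) (R := ℂ)]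
  congr
  ext k i
  simp [bt, sb, Matrix.one_apply, Pi.single_apply, eq_comm]

theorem IsB.apply_eq {μ : nV n [⋀^Fin n]→ₗ[ℂ] nV n} (hμ : IsB n μ) (x : Fin n → nV n) :
    μ x = tailDet n x • sb n 0 := by
  suffices μ = (LinearMap.toSpanSingleton ℂ (nV n) (sb n 0)).compAlternatingMap (tailDet n) by
    rw [this]
    rfl
  refine AlternatingMap.ext_succAbove (Pi.basisFun ℂ (Fin (n + 1))) fun j => ?_
  rw [← bt_eq, LinearMap.compAlternatingMap_apply, LinearMap.toSpanSingleton_apply]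
  rcases eq_or_ne j 0 with rfl | hj
  · rw [hμ.1, tailDet_bt_zero, one_smul]
  · obtain ⟨k, hk⟩ := Fin.exists_succAbove_eq hj.symm
    rw [hμ.2 j hj, tailDet_eq_zero_of_eq_sb_zero (k := k) (by simp [bt, hk]), zero_smul]

theorem IsB.isSelfAnnihilating {μ : nV n [⋀^Fin n]→ₗ[ℂ] nV n} (hμ : IsB n μ) :
    μ.IsSelfAnnihilating := by
  intro x y i
  rw [hμ.apply_eq x, μ.map_update_smul, hμ.apply_eq,
    tailDet_eq_zero_of_eq_sb_zero (update_self i _ y), zero_smul, smul_zero]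

theorem glAct_eq_coe_conj (g : nV n ≃ₗ[ℂ] nV n) (f : nV n [⋀^Fin n]→ₗ[ℂ] nV n) :
    glAct n g ⇑f = ⇑(f.conj g) :=
  rfl

def selfAnnihilatingSet (n : ℕ) : Set ((Fin n → nV n) → nV n) :=
  {ν | ∃ f : nV n [⋀^Fin n]→ₗ[ℂ] nV n, f.IsSelfAnnihilating ∧ ⇑f = ν}

theorem isClosed_selfAnnihilatingSet (n : ℕ) : IsClosed (selfAnnihilatingSet n) := by
  let coeL : (nV n [⋀^Fin n]→ₗ[ℂ] nV n) →ₗ[ℂ] (Fin n → nV n) → nV n :=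
    { toFun := (⇑), map_add' := fun _ _ => rfl, map_smul' := fun _ _ => rfl }
  have : FiniteDimensional ℂ (nV n [⋀^Fin n]→ₗ[ℂ] nV n) :=
    Module.Finite.of_injective AlternatingMap.toMultilinearMapLM
      AlternatingMap.coe_multilinearMap_injective
  have hS : selfAnnihilatingSet n = (LinearMap.range coeL : Set ((Fin n → nV n) → nV n)) ∩
      ⋂ (x : Fin n → nV n) (y : Fin n → nV n) (i : Fin n),
        {ν | ∑ k, ν x k • ν (update y i (sb n k)) = 0} := by
    ext ν
    simp only [selfAnnihilatingSet, AlternatingMap.IsSelfAnnihilating, Set.mem_inter_iff,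
      Set.mem_iInter, Set.mem_ofPred_eq, SetLike.mem_coe, LinearMap.mem_range]
    constructor
    · rintro ⟨f, hf, rfl⟩
      exact ⟨⟨f, rfl⟩, fun x y i => by rw [← f.map_update_eq_sum_sb, hf]⟩
    · rintro ⟨⟨f, rfl⟩, hf⟩
      exact ⟨f, fun x y i => by rw [f.map_update_eq_sum_sb]; exact hf x y i, rfl⟩
  rw [hS]
  refine (LinearMap.range coeL).closed_of_finiteDimensional.inter <|
    isClosed_iInter fun x => isClosed_iInter fun y => isClosed_iInter fun i => ?_
  exact isClosed_eq (by fun_prop) continuous_const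

theorem glOrbit_subset_selfAnnihilatingSet {μ : nV n [⋀^Fin n]→ₗ[ℂ] nV n} (hμ : IsB n μ) :
    glOrbit n ⇑μ ⊆ selfAnnihilatingSet n := by
  rintro _ ⟨g, rfl⟩
  exact ⟨μ.conj g, hμ.isSelfAnnihilating.conj g, rfl⟩

theorem IsB.coe_mem_glOrbit {μ f : nV n [⋀^Fin n]→ₗ[ℂ] nV n} (hμ : IsB n μ)
    (hf : f.IsSelfAnnihilating) {x : Fin n → nV n} (hx : f x ≠ 0) : ⇑f ∈ glOrbit n ⇑μ := by
  have hli : LinearIndependent ℂ (Fin.cons (f x) x : Fin (n + 1) → nV n) :=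
    f.linearIndependent_cons_of_map_update_eq_zero hx hx fun k => hf x x k
  let b := basisOfLinearIndependentOfCardEqFinrank hli (by simp)
  let g := (Pi.basisFun ℂ (Fin (n + 1))).equiv b (Equiv.refl _)
  have hg : ∀ j, g (sb n j) = b j := fun j => by
    simpa [sb] using (Pi.basisFun ℂ (Fin (n + 1))).equiv_apply j b (Equiv.refl _)
  have hgb : g.symm ∘ b = Pi.basisFun ℂ (Fin (n + 1)) := by
    funext j
    simp [← hg, sb]
  refine ⟨g, ?_⟩
  rw [glAct_eq_coe_conj]
  congr 1
  refine AlternatingMap.ext_succAbove b fun j => ?_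
  rw [AlternatingMap.conj_apply, ← Function.comp_assoc, hgb, ← bt_eq]
  cases j using Fin.cases with
  | zero =>
    rw [hμ.1, hg]
    simp [b]
  | succ j =>
    obtain ⟨k, hk⟩ := Fin.exists_succAbove_eq (Fin.succ_ne_zero j).symm
    have hbk : (b ∘ j.succ.succAbove) k = f x := by simp [b, hk]
    rw [hμ.2 _ (Fin.succ_ne_zero j), g.map_zero, ← update_eq_self k (b ∘ j.succ.succAbove), hbk]
    exact hf x _ k

theorem selfAnnihilatingSet_subset_glOrbit_union_zero {μ : nV n [⋀^Fin n]→ₗ[ℂ] nV n}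
    (hμ : IsB n μ) : selfAnnihilatingSet n ⊆ glOrbit n ⇑μ ∪ {0} := by
  rintro _ ⟨f, hf, rfl⟩
  by_cases hf0 : f = 0
  · right
    rw [hf0]
    rfl
  · obtain ⟨x, hx⟩ : ∃ x, f x ≠ 0 := by
      by_contra! h
      exact hf0 (AlternatingMap.ext h)
    exact Or.inl (hμ.coe_mem_glOrbit hf hx)

theorem pow_pred_smul_mem_glOrbit (hn : n ≠ 0) (μ : nV n [⋀^Fin n]→ₗ[ℂ] nV n) {t : ℂ}
    (ht : t ≠ 0) : t ^ (n - 1) • ⇑μ ∈ glOrbit n ⇑μ := by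
  refine ⟨LinearEquiv.smulOfNeZero ℂ (nV n) t⁻¹ (inv_ne_zero ht), funext fun x => ?_⟩
  have hsymm : ∀ v, (LinearEquiv.smulOfNeZero ℂ (nV n) t⁻¹ (inv_ne_zero ht)).symm v = t • v := by
    intro v
    rw [LinearEquiv.symm_apply_eq]
    simp [smul_smul, ht]
  simp only [glAct, hsymm, μ.map_smul_univ, Finset.prod_const, Finset.card_univ, Fintype.card_fin]
  obtain ⟨m, rfl⟩ := Nat.exists_eq_succ_of_ne_zero hn
  rw [Pi.smul_apply, LinearEquiv.smulOfNeZero_apply, smul_smul, pow_succ', inv_mul_cancel_left₀ ht,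
    Nat.succ_sub_one]

open Filter Topology in
theorem zero_mem_closure_glOrbit (hn : 2 ≤ n) (μ : nV n [⋀^Fin n]→ₗ[ℂ] nV n) :
    (0 : (Fin n → nV n) → nV n) ∈ closure (glOrbit n ⇑μ) := by
  have hlim : Tendsto (fun t : ℂ => t ^ (n - 1) • ⇑μ) (𝓝[≠] 0) (𝓝 0) := by
    have hcont : Continuous fun t : ℂ => t ^ (n - 1) • ⇑μ := by fun_prop
    simpa [zero_pow (by omega : n - 1 ≠ 0)] using (hcont.tendsto 0).mono_left nhdsWithin_le_nhds
  exact mem_closure_of_tendsto hlim <|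
    eventually_nhdsWithin_of_forall fun t ht => pow_pred_smul_mem_glOrbit (by omega) μ ht

end

/-- For every integer `n ≥ 2`, the algebra `B` has level one: the closure of
the `GL(V)`-orbit of the structure of `B` is the union of that orbit with the single point
`0` (the zero multiplication). -/
theorem B_has_level_one (n : ℕ) (hn : 2 ≤ n)
    (μ : AlternatingMap ℂ (nV n) (nV n) (Fin n)) (hμ : IsB n μ) :
    closure (glOrbit n ⇑μ) = glOrbit n ⇑μ ∪ {(0 : (Fin n → nV n) → nV n)} := by
  refine subset_antisymm ?_ <|
    Set.union_subset subset_closure (Set.singleton_subset_iff.mpr (zero_mem_closure_glOrbit hn μ))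
  calc closure (glOrbit n ⇑μ)
      ⊆ selfAnnihilatingSet n :=
        closure_minimal (glOrbit_subset_selfAnnihilatingSet hμ) (isClosed_selfAnnihilatingSet n)
    _ ⊆ glOrbit n ⇑μ ∪ {0} := selfAnnihilatingSet_subset_glOrbit_union_zero hμ
end
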